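/- The 5-dimensional nilpotent commutative associative algebra A₀₂ degenerates to A₀₅: the structure λ of A₀₅ lies in the closure of the GL(5,ℂ)-orbit O(μ) of the structure μ of A₀₂ (closure in the standard topology on the space of bilinear maps ℂ⁵ × ℂ⁵ → ℂ⁵). -/

import Mathlib

open ContinuousLinearMap

/-- The underlying space `ℂⁿ`. -/
abbrev Vn (n : ℕ) := Fin n → ℂ

/-- The space of bilinear maps `ℂⁿ × ℂⁿ → ℂⁿ` (as continuous linear maps in two
arguments), carrying its standard topology as a finite-dimensional complex vector space. -/
abbrev Bil (n : ℕ) := Vn n →L[ℂ] Vn n →L[ℂ] Vn n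

/-- The action of `GL(n, ℂ)` on bilinear maps: `(g · μ)(x, y) = g (μ (g⁻¹ x) (g⁻¹ y))`. -/
noncomputable def act {n : ℕ} (g : Vn n ≃L[ℂ] Vn n) (μ : Bil n) : Bil n :=
  ((compL ℂ (Vn n) (Vn n) (Vn n)).flip (g.symm : Vn n →L[ℂ] Vn n)).comp
    (((compL ℂ (Vn n) (Vn n) (Vn n)) (g : Vn n →L[ℂ] Vn n)).comp
      (μ.comp (g.symm : Vn n →L[ℂ] Vn n)))

@[simp] lemma act_apply {n : ℕ} (g : Vn n ≃L[ℂ] Vn n) (μ : Bil n) (x y : Vn n) :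
    act g μ x y = g (μ (g.symm x) (g.symm y)) := rfl

/-- The orbit `O(μ)` of a bilinear map under the `GL(n, ℂ)`-action. -/
noncomputable def orbit {n : ℕ} (μ : Bil n) : Set (Bil n) :=
  {ν | ∃ g : Vn n ≃L[ℂ] Vn n, ν = act g μ}

/-- The standard basis `e₁, …, e₅` of `ℂ⁵` (zero-indexed: `e i` is `e_{i+1}`). -/
def e (i : Fin 5) : Vn 5 := Pi.single i 1

/-- Multiplication table of the algebra `𝐀02` (entry `(i, j)` is `eᵢ · eⱼ`). -/
def tblA02 : Fin 5 → Fin 5 → Vn 5 :=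
  ![![e 2, 0, e 3, e 4, 0],
   ![0, e 4, 0, 0, 0],
   ![e 3, 0, e 4, 0, 0],
   ![e 4, 0, 0, 0, 0],
   ![0, 0, 0, 0, 0]]

/-- Multiplication table of the algebra `𝐀05` (entry `(i, j)` is `eᵢ · eⱼ`). -/
def tblA05 : Fin 5 → Fin 5 → Vn 5 :=
  ![![e 1, e 2, e 3, 0, 0],
   ![e 2, e 3, 0, 0, 0],
   ![e 3, 0, 0, 0, 0],
   ![0, 0, 0, 0, 0],
   ![0, 0, 0, 0, 0]]

/-!
In the basis `f₁ = t e₁, f₂ = t² e₃, f₃ = t³ e₄, f₄ = t⁴ e₅, f₅ = t³ e₂` (`t ≠ 0`) the products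
of `𝐀02` read `f₁² = f₂, f₁f₂ = f₃, f₁f₃ = f₄, f₂² = f₄, f₅² = t² f₄`: this is the table of `𝐀05`
plus `t²` times the structure `ν` whose only product is `e₅² = e₄`. Hence `λ + t² ν` lies in the
orbit of `μ` for every `t ≠ 0`, and letting `t → 0` puts `λ` in its closure.
-/

open Filter Topology

lemma tendsto_add_pow_smul {E : Type*} [AddCommGroup E] [Module ℂ E] [TopologicalSpace E]
    [IsTopologicalAddGroup E] [ContinuousSMul ℂ E] (x v : E) {k : ℕ} (hk : k ≠ 0) :
    Tendsto (fun t : ℂ => x + t ^ k • v) (𝓝 0) (𝓝 x) := by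
  have hcont : Continuous fun t : ℂ => x + t ^ k • v := by fun_prop
  simpa [zero_pow hk] using hcont.tendsto 0

section Degeneration

variable {n : ℕ}

lemma bil_ext_single {A B : Bil n}
    (h : ∀ i j, A (Pi.single i 1) (Pi.single j 1) = B (Pi.single i 1) (Pi.single j 1)) :
    A = B := by
  refine coe_injective <| (Pi.basisFun ℂ _).ext fun i =>
    coe_injective <| (Pi.basisFun ℂ _).ext fun j => ?_
  simpa using h i j

lemma act_eq_iff {g : Vn n ≃L[ℂ] Vn n} {μ ν : Bil n} :
    act g μ = ν ↔ ∀ i j, μ (g.symm (Pi.single i 1)) (g.symm (Pi.single j 1)) =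
      g.symm (ν (Pi.single i 1) (Pi.single j 1)) := by
  refine ⟨fun h i j => by rw [← h, act_apply, ContinuousLinearEquiv.symm_apply_apply],
    fun h => bil_ext_single fun i j => ?_⟩
  rw [act_apply, h, ContinuousLinearEquiv.apply_symm_apply]

lemma mem_closure_orbit_of_add_pow_smul_mem {μ lam P : Bil n} {k : ℕ} (hk : k ≠ 0)
    (horbit : ∀ t : ℂ, t ≠ 0 → lam + t ^ k • P ∈ orbit μ) : lam ∈ closure (orbit μ) :=
  mem_closure_of_tendsto ((tendsto_add_pow_smul lam P hk).mono_left nhdsWithin_le_nhds)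
    (eventually_nhdsWithin_of_forall (s := {0}ᶜ) horbit)

noncomputable def monomialEquiv (σ : Equiv.Perm (Fin n)) (c : Fin n → ℂˣ) : Vn n ≃L[ℂ] Vn n :=
  LinearEquiv.toContinuousLinearEquiv
    { toFun := fun x k => c (σ.symm k) * x (σ.symm k)
      invFun := fun y i => ((c i)⁻¹ : ℂˣ) * y (σ i)
      map_add' := fun x y => by funext k; simp [mul_add]
      map_smul' := fun a x => by funext k; simp [mul_left_comm]
      left_inv := fun x => by funext i; simp
      right_inv := fun y => by funext k; simp }

lemma monomialEquiv_single (σ : Equiv.Perm (Fin n)) (c : Fin n → ℂˣ) (i : Fin n) :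
    monomialEquiv σ c (Pi.single i 1) = (c i : ℂ) • Pi.single (σ i) 1 := by
  funext k
  simp only [monomialEquiv, LinearEquiv.coe_toContinuousLinearEquiv', LinearEquiv.coe_mk,
    LinearMap.coe_mk, AddHom.coe_mk, Pi.single_apply, Equiv.symm_apply_eq, mul_ite, mul_one,
    mul_zero, Pi.smul_apply, smul_eq_mul]
  split_ifs with h
  · rw [h, Equiv.symm_apply_apply]
  · rfl

end Degeneration

def cycleOneToFour : Equiv.Perm (Fin 5) where
  toFun := ![0, 2, 3, 4, 1]
  invFun := ![0, 4, 1, 2, 3]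
  left_inv := by decide
  right_inv := by decide

lemma cycleOneToFour_apply (i : Fin 5) : cycleOneToFour i = ![0, 2, 3, 4, 1] i := rfl

/-- `basisA05 t` maps `eᵢ` to the vector `fᵢ` of the header. -/
noncomputable def basisA05 (t : ℂˣ) : Vn 5 ≃L[ℂ] Vn 5 :=
  monomialEquiv cycleOneToFour fun i => t ^ (![1, 2, 3, 4, 3] : Fin 5 → ℕ) i

noncomputable def mulE5E5 : Bil 5 :=
  (proj (4 : Fin 5)).smulRight ((proj (4 : Fin 5)).smulRight (e 3))

lemma mulE5E5_apply (x y : Vn 5) : mulE5E5 x y = x 4 • y 4 • e 3 := rfl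

lemma act_basisA05_symm {μ lam : Bil 5}
    (hμ : ∀ i j : Fin 5, μ (e i) (e j) = tblA02 i j)
    (hlam : ∀ i j : Fin 5, lam (e i) (e j) = tblA05 i j) (t : ℂˣ) :
    act (basisA05 t).symm μ = lam + (t ^ 2 : ℂ) • mulE5E5 := by
  simp only [e] at hμ hlam
  rw [act_eq_iff]
  intro i j
  simp only [ContinuousLinearEquiv.symm_symm, basisA05, monomialEquiv_single, map_smul,
    smul_apply, add_apply, map_add, mulE5E5_apply, hμ, hlam]
  fin_cases i <;> fin_cases j <;>
    simp [tblA02, tblA05, e, monomialEquiv_single, cycleOneToFour_apply, smul_smul] <;> ring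

/-- The $5$-dimensional nilpotent commutative associative algebra `𝐀02` degenerates to
`𝐀05`: the structure `λ` of `𝐀05` lies in the closure of
the `GL(5, ℂ)`-orbit `O(μ)` of the structure `μ` of `𝐀02`. -/
theorem A02_deg_A05 (μ lam : Bil 5)
    (hμ : ∀ i j : Fin 5, μ (e i) (e j) = tblA02 i j)
    (hlam : ∀ i j : Fin 5, lam (e i) (e j) = tblA05 i j) :
    lam ∈ closure (orbit μ) := by
  refine mem_closure_orbit_of_add_pow_smul_mem (P := mulE5E5) two_ne_zero fun t ht =>
    ⟨(basisA05 (Units.mk0 t ht)).symm, ?_⟩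
  rw [act_basisA05_symm hμ hlam, Units.val_mk0]
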